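/- arXiv:0705.3458 — 2 statements merged into one kernel-verified Lean document; each statement's English description precedes it below -/
import Mathlib

section
/- Let ρ be a leaf of the binary resolution tree T of a connected ribbon graph Γ with ordered edges, and let Q ∈ [ρ] be the corresponding quasi-tree. Then an edge e is unresolved in ρ (ρ(e) = *) if and only if e is live with respect to Q. -/
open Equiv

noncomputable section

/-- Number of orbits of the map `f` on `α` (the equivalence generated by `i ~ f i`). -/
def orbCountOf {α : Type*} (f : α → α) : ℕ :=
  Nat.card (Quot (fun i j : α => j = f i))

/-- `x` lies on the arc of the cycle of `f` starting at `a` strictly before reaching `b`. -/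
def ReachesBefore {α : Type*} (f : α → α) (a x b : α) : Prop :=
  ∃ m : ℕ, f^[m] a = x ∧ ∀ k ≤ m, f^[k] a ≠ b

/-- The chords `{a,b}` and `{c,d}` of the cycle parametrized by `f` intersect:
exactly one of `c`, `d` lies on the arc from `a` to `b`. -/
def ChordsCross {α : Type*} (f : α → α) (a b c d : α) : Prop :=
  ¬ (ReachesBefore f a c b ↔ ReachesBefore f a d b)

/-- A combinatorial oriented ribbon graph on `2 * n` half-edges, given by a vertex
permutation `σ0` and a fixed-point free involution `σ1` pairing the half-edges
into edges.  Vertices, edges and faces are the orbits of `σ0`, `σ1`, `σ2 = (σ0 σ1)⁻¹`. -/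
structure RibbonGraph (n : ℕ) where
  σ0 : Perm (Fin (2 * n))
  σ1 : Perm (Fin (2 * n))
  invol : σ1 * σ1 = 1
  fixfree : ∀ i, σ1 i ≠ i

namespace RibbonGraph

variable {n : ℕ} (Γ : RibbonGraph n)

/-- The face permutation `σ2 = (σ0 σ1)⁻¹`, so that `σ0 σ1 σ2 = 1`. -/
def σ2 : Perm (Fin (2 * n)) := (Γ.σ0 * Γ.σ1)⁻¹

/-- `Γ` is connected iff the group generated by `σ0, σ1` acts transitively on half-edges. -/
def Connected : Prop :=
  ∀ i j : Fin (2 * n), ∃ g ∈ Subgroup.closure {Γ.σ0, Γ.σ1}, g i = j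

/-- A set `A` of half-edges determines a spanning ribbon subgraph iff it is closed
under the edge involution `σ1`. -/
def Closed (A : Finset (Fin (2 * n))) : Prop := ∀ i ∈ A, Γ.σ1 i ∈ A

/-- The number of vertices (orbits of `σ0`). -/
def vCount : ℕ := orbCountOf Γ.σ0

/-- The number of edges of the spanning subgraph with half-edge set `A`. -/
def eCount (_Γ : RibbonGraph n) (A : Finset (Fin (2 * n))) : ℕ := A.card / 2

/-- Relation whose equivalence classes are the connected components of the spanning
subgraph with half-edge set `A`. -/
def compRel (A : Finset (Fin (2 * n))) (i j : Fin (2 * n)) : Prop :=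
  j = Γ.σ0 i ∨ (i ∈ A ∧ j = Γ.σ1 i)

/-- The number of connected components of the spanning subgraph `A`. -/
def kComp (A : Finset (Fin (2 * n))) : ℕ := Nat.card (Quot (Γ.compRel A))

/-- The boundary map of a regular neighborhood of the spanning subgraph `A` on the
surface of `Γ`: it is `σ0` on half-edges not in `A`, and `σ2⁻¹ = σ0 σ1` on half-edges
in `A`.  Its orbits are the boundary components (faces) of `A`. -/
def bdryMap (A : Finset (Fin (2 * n))) : Fin (2 * n) → Fin (2 * n) :=
  fun i => if i ∈ A then Γ.σ0 (Γ.σ1 i) else Γ.σ0 i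

/-- The number of faces (boundary components `|γ_A|`) of the spanning subgraph `A`. -/
def faces (A : Finset (Fin (2 * n))) : ℕ := orbCountOf (Γ.bdryMap A)

/-- The nullity `n(A) = e(A) - v(Γ) + k(A)` of the spanning subgraph `A`. -/
def nullity (A : Finset (Fin (2 * n))) : ℤ := (Γ.eCount A : ℤ) + Γ.kComp A - Γ.vCount

/-- Twice the genus of the spanning subgraph `A`:
`2 g(A) = 2 k(A) - v(Γ) + e(A) - f(A)`. -/
def twoGenus (A : Finset (Fin (2 * n))) : ℤ :=
  2 * (Γ.kComp A : ℤ) - Γ.vCount + Γ.eCount A - Γ.faces A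

/-- The nullity of `A`, as a natural number. -/
def nullNat (A : Finset (Fin (2 * n))) : ℕ := Γ.eCount A + Γ.kComp A - Γ.vCount

/-- The genus of `A`, as a natural number. -/
def genusNat (A : Finset (Fin (2 * n))) : ℕ :=
  (2 * Γ.kComp A + Γ.eCount A - Γ.vCount - Γ.faces A) / 2

/-- A quasi-tree: a connected spanning ribbon subgraph with exactly one face. -/
def IsQuasiTree (A : Finset (Fin (2 * n))) : Prop :=
  Γ.Closed A ∧ Γ.kComp A = 1 ∧ Γ.faces A = 1

/-- The order of the edge of the half-edge `i`: the minimum of its two half-edge labels. -/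
def edgeOrd (i : Fin (2 * n)) : ℕ := min i.1 (Γ.σ1 i).1

/-- The chords of the edges of `i` and `j` intersect in the ordered chord diagram `C_A`
of the boundary curve `γ_A`. -/
def Crosses (A : Finset (Fin (2 * n))) (i j : Fin (2 * n)) : Prop :=
  ChordsCross (Γ.bdryMap A) i (Γ.σ1 i) j (Γ.σ1 j)

/-- The edge of `i` is live with respect to the quasi-tree `A`: its chord in `C_A`
intersects no lower-ordered chord. -/
def Live (A : Finset (Fin (2 * n))) (i : Fin (2 * n)) : Prop :=
  ∀ j : Fin (2 * n), Γ.edgeOrd j < Γ.edgeOrd i → ¬ Γ.Crosses A i j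

open scoped Classical in
/-- The half-edge set `D(A)` of the internally dead edges of the quasi-tree `A`. -/
noncomputable def deadIn (A : Finset (Fin (2 * n))) : Finset (Fin (2 * n)) :=
  A.filter (fun i => ¬ Γ.Live A i)

open scoped Classical in
/-- The number of externally live edges `|E(A)|` of the quasi-tree `A`. -/
noncomputable def extLiveCount (A : Finset (Fin (2 * n))) : ℕ :=
  (Finset.univ.filter (fun i => i ∉ A ∧ Γ.Live A i)).card / 2

open scoped Classical in
/-- The number of internally live edges `|I(A)|` of the quasi-tree `A`. -/
noncomputable def intLiveCount (A : Finset (Fin (2 * n))) : ℕ :=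
  (A.filter (fun i => Γ.Live A i)).card / 2

open scoped Classical in
/-- The Bollobás–Riordan polynomial of `Γ`, via its spanning subgraph expansion
`C(Γ) = Σ_H (X-1)^(k(H)-1) Y^(n(H)) Z^(g(H))`. -/
noncomputable def BR (X Y Z : ℚ) : ℚ :=
  ∑ A ∈ Finset.univ.filter (fun A : Finset (Fin (2 * n)) => Γ.Closed A),
    (X - 1) ^ (Γ.kComp A - 1) * Y ^ Γ.nullNat A * Z ^ Γ.genusNat A

open scoped Classical in
/-- The set of quasi-trees of `Γ`. -/
noncomputable def quasiTrees : Finset (Finset (Fin (2 * n))) :=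
  Finset.univ.filter (fun A => Γ.IsQuasiTree A)

open scoped Classical in
/-- The Tutte polynomial of the graph `G_A` (vertices: the components of `D(A)`;
edges: the internally live edges of `A`), via its spanning subgraph expansion
`T(x,y) = Σ_W (x-1)^(k(W)-1) (y-1)^(n(W))`.  A spanning subgraph `W` of `G_A`
corresponds to a `σ1`-closed set `S` of internally live half-edges; then
`k(W) = k(D ∪ S)` and `n(W) = k(D ∪ S) + e(S) - k(D)`. -/
noncomputable def TutteGQ (A : Finset (Fin (2 * n))) (x y : ℚ) : ℚ :=
  ∑ S ∈ (A.filter (fun i => Γ.Live A i)).powerset.filter (fun S => Γ.Closed S),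
    (x - 1) ^ (Γ.kComp (Γ.deadIn A ∪ S) - 1) *
      (y - 1) ^ (Γ.kComp (Γ.deadIn A ∪ S) + Γ.eCount S - Γ.kComp (Γ.deadIn A))

/-- A partial resolution assigns `some true` / `some false` / `none` ( `*` )
to half-edges; it should be constant on edges. -/
def EdgeConst (ρ : Fin (2 * n) → Option Bool) : Prop := ∀ i, ρ (Γ.σ1 i) = ρ i

open scoped Classical in
/-- The half-edge set `H_ρ` of the partial resolution `ρ`. -/
noncomputable def Hset (_Γ : RibbonGraph n) (ρ : Fin (2 * n) → Option Bool) : Finset (Fin (2 * n)) :=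
  Finset.univ.filter (fun i => ρ i = some true)

/-- `ρ` is split: `f(H_ρ ∪ U) > 1` for every (σ1-closed) set `U` of unresolved edges. -/
def Split (ρ : Fin (2 * n) → Option Bool) : Prop :=
  ∀ U : Finset (Fin (2 * n)), (∀ i ∈ U, ρ i = none) → (∀ i ∈ U, Γ.σ1 i ∈ U) →
    1 < Γ.faces (Γ.Hset ρ ∪ U)

/-- Resolve the edge of `e` in `ρ` to the value `b`. -/
def resolveEdge (ρ : Fin (2 * n) → Option Bool) (e : Fin (2 * n)) (b : Bool) :
    Fin (2 * n) → Option Bool :=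
  fun i => if i = e ∨ i = Γ.σ1 e then some b else ρ i

/-- The unresolved edge `e` is nugatory in `ρ`: one of its two resolutions is split. -/
def Nugatory (ρ : Fin (2 * n) → Option Bool) (e : Fin (2 * n)) : Prop :=
  Γ.Split (Γ.resolveEdge ρ e false) ∨ Γ.Split (Γ.resolveEdge ρ e true)

/-- `Γ(ρ) = γ_ρ ∪ Int(ρ⁻¹(*))` is connected: the boundary components of `H_ρ`
together with the unresolved edges connect all half-edges. -/
def GammaConn (ρ : Fin (2 * n) → Option Bool) : Prop :=
  ∀ i j : Fin (2 * n),
    Relation.EqvGen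
      (fun x y => y = Γ.bdryMap (Γ.Hset ρ) x ∨ (ρ x = none ∧ y = Γ.σ1 x)) i j

/-- The partial resolution seen at the moment the edge of `e` is considered in the
resolution process: edges of higher order keep their value, the rest are unresolved. -/
def restrictAbove (ρ : Fin (2 * n) → Option Bool) (e : Fin (2 * n)) :
    Fin (2 * n) → Option Bool :=
  fun j => if Γ.edgeOrd e < Γ.edgeOrd j then ρ j else none

/-- `ρ` is a leaf of the binary resolution tree `𝒯`: edges are resolved in decreasing
order, an edge is left unresolved exactly when it is nugatory at its turn. -/
def IsLeaf (ρ : Fin (2 * n) → Option Bool) : Prop :=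
  Γ.EdgeConst ρ ∧
  (∀ i, ρ i = none → Γ.Nugatory (Γ.restrictAbove ρ i) i) ∧
  (∀ i, ρ i ≠ none → ¬ Γ.Nugatory (Γ.restrictAbove ρ i) i)

/-- The spanning subgraph `A` lies in the interval `[ρ]` of the Boolean lattice. -/
def MemInterval (_Γ : RibbonGraph n) (ρ : Fin (2 * n) → Option Bool) (A : Finset (Fin (2 * n))) : Prop :=
  ∀ i, (ρ i = some true → i ∈ A) ∧ (ρ i = some false → i ∉ A)

/-- The pair of half-edges of the edge of `i`. -/
def edgePair (i : Fin (2 * n)) : Finset (Fin (2 * n)) := {i, Γ.σ1 i}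

/-- For a spanning tree `A`, `j ∈ cut(A, i)` (equivalently `i ∈ cyc(A, j)`):
the edge of `j` reconnects `A` minus the edge of `i`. -/
def InCut (A : Finset (Fin (2 * n))) (i j : Fin (2 * n)) : Prop :=
  Γ.kComp ((A \ Γ.edgePair i) ∪ Γ.edgePair j) = 1

/-- Tutte's internal activity: `i ∈ A` is internally active iff it is the
lowest-ordered edge of its cut `cut(A, i)`. -/
def TutteIntActive (A : Finset (Fin (2 * n))) (i : Fin (2 * n)) : Prop :=
  i ∈ A ∧ ∀ j, j ∉ A → Γ.InCut A i j → Γ.edgeOrd i < Γ.edgeOrd j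

/-- Tutte's external activity: `j ∉ A` is externally active iff it is the
lowest-ordered edge of its cycle `cyc(A, j)`. -/
def TutteExtActive (A : Finset (Fin (2 * n))) (j : Fin (2 * n)) : Prop :=
  j ∉ A ∧ ∀ i ∈ A, Γ.InCut A i j → Γ.edgeOrd j < Γ.edgeOrd i

end RibbonGraph

end

section OrbitLemmas

open Function Relation

variable {α : Type*}

private lemma eqvGen_iterate (f : α → α) (u : α) (m : ℕ) :
    EqvGen (fun p q => q = f p) u (f^[m] u) := by
  induction m with
  | zero => exact EqvGen.refl u
  | succ m ih =>
    refine EqvGen.trans _ _ _ ih (EqvGen.rel _ _ ?_)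
    rw [Function.iterate_succ_apply']

private lemma exists_period [Finite α] {f : α → α} (hf : Function.Bijective f) :
    ∃ P, 0 < P ∧ ∀ u, f^[P] u = u := by
  classical
  let g : Equiv.Perm α := Equiv.ofBijective f hf
  refine ⟨orderOf g, orderOf_pos g, fun u => ?_⟩
  have h1 : g ^ orderOf g = 1 := pow_orderOf_eq_one g
  have h2 : (⇑g)^[orderOf g] u = u := by
    rw [Equiv.Perm.iterate_eq_pow, h1]; rfl
  simpa [g] using h2

private lemma iterate_fix {f : α → α} {P : ℕ} (hP : ∀ u, f^[P] u = u) :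
    ∀ m u, f^[P * m] u = u := by
  intro m
  induction m with
  | zero => simp
  | succ m ih =>
    intro u
    rw [Nat.mul_succ, Function.iterate_add_apply, hP, ih]

private lemma reach_symm [Finite α] {f : α → α} (hf : Function.Bijective f) {u v : α}
    (h : ∃ m, f^[m] u = v) : ∃ m, f^[m] v = u := by
  obtain ⟨P, hP0, hP⟩ := exists_period hf
  obtain ⟨m, hm⟩ := h
  refine ⟨P * m - m, ?_⟩
  have hle : m ≤ P * m := Nat.le_mul_of_pos_left m hP0
  rw [← hm, ← Function.iterate_add_apply, Nat.sub_add_cancel hle, iterate_fix hP]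

private lemma orbCount_eq_one [Finite α] [Nonempty α] {f : α → α}
    (h : ∀ u v : α, EqvGen (fun p q => q = f p) u v) : orbCountOf f = 1 := by
  have hne : Nonempty (Quot (fun i j : α => j = f i)) :=
    ⟨Quot.mk _ (Classical.arbitrary α)⟩
  rw [orbCountOf, Nat.card_eq_one_iff_unique]
  constructor
  · constructor
    intro p q
    induction p using Quot.ind with | _ p =>
    induction q using Quot.ind with | _ q =>
    exact Quot.eqvGen_sound (h p q)
  · infer_instance

private lemma one_lt_orbCount [Finite α] {f : α → α} (I : Set α)
    (hI : ∀ u, u ∈ I ↔ f u ∈ I) {p q : α} (hp : p ∈ I) (hq : q ∉ I) :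
    1 < orbCountOf f := by
  rw [orbCountOf, Finite.one_lt_card_iff_nontrivial]
  refine ⟨Quot.mk _ p, Quot.mk _ q, fun hc => ?_⟩
  have h2 := congrArg (Quot.lift (fun u => u ∈ I)
    (fun u v (huv : v = f u) => by rw [huv]; exact propext (hI u))) hc
  simp only [Quot.lift] at h2
  exact hq (h2 ▸ hp)

private lemma reach_of_orbCount_eq_one [Finite α] {f : α → α} (hf : Function.Bijective f)
    (h1 : orbCountOf f = 1) : ∀ u v, ∃ m, f^[m] u = v := by
  intro u v
  have hss : Subsingleton (Quot (fun p q : α => q = f p)) := by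
    rw [orbCountOf, Nat.card_eq_one_iff_unique] at h1
    exact h1.1
  have he : EqvGen (fun p q : α => q = f p) u v :=
    Quot.eqvGen_exact (Subsingleton.elim _ _)
  have key : ∀ {x y : α}, EqvGen (fun p q : α => q = f p) x y →
      ∃ m k, f^[m] x = f^[k] y := by
    intro x y h
    induction h with
    | rel x y hxy => exact ⟨1, 0, by simp [hxy]⟩
    | refl x => exact ⟨0, 0, rfl⟩
    | symm x y _ ih => obtain ⟨m, k, hmk⟩ := ih; exact ⟨k, m, hmk.symm⟩
    | trans x y z _ _ ih1 ih2 =>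
      obtain ⟨m, k, hh1⟩ := ih1
      obtain ⟨m', k', hh2⟩ := ih2
      refine ⟨m' + m, k + k', ?_⟩
      rw [Function.iterate_add_apply, hh1, ← Function.iterate_add_apply, Nat.add_comm m' k,
        Function.iterate_add_apply, hh2, ← Function.iterate_add_apply]
  obtain ⟨m, k, hmk⟩ := key he
  obtain ⟨P, hP0, hP⟩ := exists_period hf
  refine ⟨P * k - k + m, ?_⟩
  have hle : k ≤ P * k := Nat.le_mul_of_pos_left k hP0
  rw [Function.iterate_add_apply, hmk, ← Function.iterate_add_apply,
    Nat.sub_add_cancel hle, iterate_fix hP]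

end OrbitLemmas
section ArcLemmas

open Function Relation

variable {α : Type*} [Finite α] {c : α → α} {a b : α}

open scoped Classical in
private noncomputable def arcLen (hex : ∃ k, c^[k] a = b) : ℕ := Nat.find hex

private def arcSet (hex : ∃ k, c^[k] a = b) : Set α :=
  {u | ∃ k, 0 < k ∧ k ≤ arcLen hex ∧ c^[k] a = u}

open scoped Classical in
private lemma arcLen_spec (hex : ∃ k, c^[k] a = b) : c^[arcLen hex] a = b :=
  Nat.find_spec hex

open scoped Classical in
private lemma arcLen_min (hex : ∃ k, c^[k] a = b) {t : ℕ} (ht : t < arcLen hex) :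
    c^[t] a ≠ b := Nat.find_min hex ht

private lemma arcLen_pos (hab : a ≠ b) (hex : ∃ k, c^[k] a = b) : 0 < arcLen hex := by
  rcases Nat.eq_zero_or_pos (arcLen hex) with h | h
  · exact absurd (by rw [← arcLen_spec hex, h]; rfl : a = b) hab
  · exact h

private lemma iter_cancel (hinj : Function.Injective c) {m k : ℕ} {u : α}
    (hkm : k ≤ m) (h : c^[m] u = c^[k] u) : c^[m - k] u = u := by
  apply hinj.iterate k
  rw [← Function.iterate_add_apply, Nat.add_sub_cancel' hkm, h]

private lemma iter_ne_a (hab : a ≠ b) (hex : ∃ k, c^[k] a = b) {t : ℕ}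
    (ht0 : 0 < t) (hts : t ≤ arcLen hex) : c^[t] a ≠ a := by
  intro h
  have hs := arcLen_spec hex
  have h2 := Function.iterate_add_apply c (arcLen hex - t) t a
  rw [h, Nat.sub_add_cancel hts, hs] at h2
  exact arcLen_min hex (Nat.sub_lt (lt_of_lt_of_le ht0 hts) ht0) h2.symm

private lemma mem_arc_b (hab : a ≠ b) (hex : ∃ k, c^[k] a = b) : b ∈ arcSet hex :=
  ⟨arcLen hex, arcLen_pos hab hex, le_refl _, arcLen_spec hex⟩

private lemma mem_arc_ca (hab : a ≠ b) (hex : ∃ k, c^[k] a = b) : c a ∈ arcSet hex :=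
  ⟨1, one_pos, arcLen_pos hab hex, rfl⟩

private lemma a_not_mem_arc (hab : a ≠ b) (hex : ∃ k, c^[k] a = b) : a ∉ arcSet hex :=
  fun ⟨_, hk0, hks, hk⟩ => iter_ne_a hab hex hk0 hks hk

private lemma cb_not_mem_arc (hinj : Function.Injective c) (hab : a ≠ b)
    (hex : ∃ k, c^[k] a = b) : c b ∉ arcSet hex := by
  rintro ⟨k, hk0, hks, hk⟩
  have hcb : c^[arcLen hex + 1] a = c b := by
    rw [Function.iterate_succ_apply', arcLen_spec hex]
  have := iter_cancel hinj (by omega : k ≤ arcLen hex + 1) (by rw [hcb, hk])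
  exact iter_ne_a hab hex (by omega) (by omega) this

private lemma arc_step (hinj : Function.Injective c) (hab : a ≠ b)
    (hex : ∃ k, c^[k] a = b) {u : α} (hua : u ≠ a) (hub : u ≠ b) :
    u ∈ arcSet hex ↔ c u ∈ arcSet hex := by
  constructor
  · rintro ⟨k, hk0, hks, hk⟩
    have hklt : k < arcLen hex := by
      rcases lt_or_eq_of_le hks with h | h
      · exact h
      · exact absurd (by rw [← hk, h, arcLen_spec hex] : u = b) hub
    exact ⟨k + 1, Nat.succ_pos _, hklt, by rw [Function.iterate_succ_apply', hk]⟩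
  · rintro ⟨k, hk0, hks, hk⟩
    rcases Nat.lt_or_ge k 2 with h2 | h2
    · have hk1 : k = 1 := by omega
      subst hk1
      exact absurd (hinj hk : a = u) (Ne.symm hua)
    · refine ⟨k - 1, by omega, by omega, ?_⟩
      apply hinj
      rw [← Function.iterate_succ_apply' c (k - 1) a, (by omega : (k-1).succ = k), hk]

private lemma rb_iff (hex : ∃ k, c^[k] a = b) {x : α} :
    ReachesBefore c a x b ↔ ∃ m, m < arcLen hex ∧ c^[m] a = x := by
  constructor
  · rintro ⟨m, hm, hb⟩
    refine ⟨m, ?_, hm⟩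
    by_contra h
    exact hb (arcLen hex) (Nat.le_of_not_lt h) (arcLen_spec hex)
  · rintro ⟨m, hms, hm⟩
    exact ⟨m, hm, fun k hk => arcLen_min hex (lt_of_le_of_lt hk hms)⟩

private lemma mem_arc_iff_rb (hab : a ≠ b) (hex : ∃ k, c^[k] a = b) {x : α}
    (hxa : x ≠ a) (hxb : x ≠ b) :
    x ∈ arcSet hex ↔ ReachesBefore c a x b := by
  rw [rb_iff hex]
  constructor
  · rintro ⟨k, hk0, hks, hk⟩
    have hne : k ≠ arcLen hex := fun h => hxb (by rw [← hk, h, arcLen_spec hex])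
    exact ⟨k, lt_of_le_of_ne hks hne, hk⟩
  · rintro ⟨m, hms, hm⟩
    have hne : m ≠ 0 := fun h => hxa (by rw [← hm, h]; rfl)
    exact ⟨m, Nat.pos_of_ne_zero hne, le_of_lt hms, hm⟩

open scoped Classical in
private noncomputable def twoPt (c : α → α) (a b : α) : α → α :=
  fun u => if u = a then c b else if u = b then c a else c u

private lemma twoPt_a : twoPt c a b a = c b := by simp [twoPt]

private lemma twoPt_b (hab : a ≠ b) : twoPt c a b b = c a := by
  simp [twoPt, Ne.symm hab]

private lemma twoPt_other {u : α} (hua : u ≠ a) (hub : u ≠ b) : twoPt c a b u = c u := by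
  simp [twoPt, hua, hub]

private lemma arc_iter (hab : a ≠ b) (hex : ∃ k, c^[k] a = b) :
    ∀ (t k : ℕ), (∀ i < t, c^[k + i] a ≠ a ∧ c^[k + i] a ≠ b) →
      (twoPt c a b)^[t] (c^[k] a) = c^[k + t] a := by
  intro t
  induction t with
  | zero => simp
  | succ t ih =>
    intro k hcond
    have h0 := hcond 0 (Nat.succ_pos t)
    rw [Nat.add_zero] at h0
    have hstep : twoPt c a b (c^[k] a) = c^[k + 1] a := by
      rw [twoPt_other h0.1 h0.2]
      exact (Function.iterate_succ_apply' c k a).symm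
    rw [Function.iterate_succ_apply, hstep]
    have hcond' : ∀ i < t, c^[(k + 1) + i] a ≠ a ∧ c^[(k + 1) + i] a ≠ b := by
      intro i hi
      have h := hcond (i + 1) (Nat.succ_lt_succ hi)
      rwa [(by omega : k + (i + 1) = (k + 1) + i)] at h
    rw [ih (k + 1) hcond']
    rw [(by omega : (k + 1) + t = k + (t + 1))]

private lemma reach_b_of_mem (hab : a ≠ b) (hex : ∃ k, c^[k] a = b) {u : α}
    (hu : u ∈ arcSet hex) : ∃ m, (twoPt c a b)^[m] u = b := by
  obtain ⟨k, hk0, hks, hk⟩ := hu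
  refine ⟨arcLen hex - k, ?_⟩
  rw [← hk, arc_iter hab hex (arcLen hex - k) k
    (fun i hi => ⟨iter_ne_a hab hex (by omega) (by omega), arcLen_min hex (by omega)⟩),
    Nat.add_sub_cancel' hks]
  exact arcLen_spec hex

private lemma reach_of_mem_from_b (hab : a ≠ b) (hex : ∃ k, c^[k] a = b) {x : α}
    (hx : x ∈ arcSet hex) : ∃ m, (twoPt c a b)^[m] b = x := by
  by_cases hxb : x = b
  · exact ⟨0, hxb.symm⟩
  obtain ⟨p, hp0, hps, hp⟩ := hx
  have hplt : p < arcLen hex := by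
    rcases lt_or_eq_of_le hps with h | h
    · exact h
    · exact absurd (by rw [← hp, h, arcLen_spec hex] : x = b) hxb
  refine ⟨p, ?_⟩
  have hgb : twoPt c a b b = c^[1] a := twoPt_b hab
  have hiter := arc_iter hab hex (p - 1) 1
    (fun i hi => ⟨iter_ne_a hab hex (by omega) (by omega), arcLen_min hex (by omega)⟩)
  calc (twoPt c a b)^[p] b = (twoPt c a b)^[(p-1) + 1] b := by
        rw [Nat.sub_add_cancel hp0]
    _ = (twoPt c a b)^[p-1] (twoPt c a b b) := Function.iterate_add_apply _ _ _ _
    _ = c^[1 + (p - 1)] a := by rw [hgb, hiter]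
    _ = x := by rw [(by omega : 1 + (p - 1) = p), hp]

private lemma min_rep_no_period {M d : ℕ} {u : α} (hMspec : c^[M] a = u)
    (hMmin : ∀ t < M, c^[t] a ≠ u) (hd0 : 0 < d) (hdM : d ≤ M)
    (h : c^[d] a = a) : False := by
  have h2 := Function.iterate_add_apply c (M - d) d a
  rw [h, Nat.sub_add_cancel hdM, hMspec] at h2
  exact hMmin (M - d) (by omega) h2.symm

private lemma reach_from_a_of_not_mem (hinj : Function.Injective c) (hab : a ≠ b)
    (hex : ∃ k, c^[k] a = b) (hso : ∀ u v : α, ∃ m, c^[m] u = v) {u : α}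
    (hu : u ∉ arcSet hex) : ∃ m, (twoPt c a b)^[m] a = u := by
  classical
  by_cases hua : u = a
  · exact ⟨0, hua.symm⟩
  have hex2 : ∃ m, c^[m] a = u := hso a u
  set M := Nat.find hex2 with hM
  have hMspec : c^[M] a = u := Nat.find_spec hex2
  have hMmin : ∀ t < M, c^[t] a ≠ u := fun t ht => Nat.find_min hex2 ht
  have hM0 : M ≠ 0 := fun h => hua (by rw [← hMspec, h]; rfl)
  have hMgt : arcLen hex < M := by
    by_contra h
    exact hu ⟨M, Nat.pos_of_ne_zero hM0, Nat.le_of_not_lt h, hMspec⟩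
  have hga : twoPt c a b a = c^[arcLen hex + 1] a := by
    rw [twoPt_a, Function.iterate_succ_apply', arcLen_spec hex]
  have hiter := arc_iter hab hex (M - (arcLen hex + 1)) (arcLen hex + 1) (fun i hi => ?_)
  · refine ⟨M - (arcLen hex + 1) + 1, ?_⟩
    rw [Function.iterate_succ_apply, hga, hiter,
      (by omega : arcLen hex + 1 + (M - (arcLen hex + 1)) = M), hMspec]
  · constructor
    · intro h
      exact min_rep_no_period hMspec hMmin (by omega : 0 < arcLen hex + 1 + i)
        (by omega) h
    · intro h
      have hc := iter_cancel hinj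
        (by omega : arcLen hex ≤ arcLen hex + 1 + i)
        (by rw [h, arcLen_spec hex])
      exact min_rep_no_period hMspec hMmin
        (by omega : 0 < arcLen hex + 1 + i - arcLen hex) (by omega) hc

private lemma arc_invariant (hinj : Function.Injective c) (hab : a ≠ b)
    (hex : ∃ k, c^[k] a = b) : ∀ u, u ∈ arcSet hex ↔ twoPt c a b u ∈ arcSet hex := by
  intro u
  by_cases hua : u = a
  · subst hua
    rw [twoPt_a]
    exact iff_of_false (a_not_mem_arc hab hex) (cb_not_mem_arc hinj hab hex)
  by_cases hub : u = b
  · subst hub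
    rw [twoPt_b hab]
    exact iff_of_true (mem_arc_b hab hex) (mem_arc_ca hab hex)
  · rw [twoPt_other hua hub]
    exact arc_step hinj hab hex hua hub

private theorem orbCount_split (hinj : Function.Injective c)
    (hso : ∀ u v : α, ∃ m, c^[m] u = v) (hab : a ≠ b)
    (τ : α → α) (hτa : τ a = b) (hτinv : ∀ u, τ (τ u) = u)
    (hchord : ∀ u, u ≠ a → u ≠ b →
      (ReachesBefore c a u b ↔ ReachesBefore c a (τ u) b)) :
    1 < orbCountOf (fun u => c (τ u)) := by
  have hex : ∃ k, c^[k] a = b := hso a b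
  have hτb : τ b = a := by rw [← hτa, hτinv]
  refine one_lt_orbCount (arcSet hex) ?_ (mem_arc_ca hab hex) (a_not_mem_arc hab hex)
  intro u
  by_cases hua : u = a
  · subst hua
    rw [hτa]
    exact iff_of_false (a_not_mem_arc hab hex) (cb_not_mem_arc hinj hab hex)
  by_cases hub : u = b
  · subst hub
    rw [hτb]
    exact iff_of_true (mem_arc_b hab hex) (mem_arc_ca hab hex)
  · have hτua : τ u ≠ a := fun h => hub (by rw [← hτinv u, h, hτa])
    have hτub : τ u ≠ b := fun h => hua (by rw [← hτinv u, h, hτb])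
    rw [mem_arc_iff_rb hab hex hua hub, hchord u hua hub,
      ← mem_arc_iff_rb hab hex hτua hτub]
    exact arc_step hinj hab hex hτua hτub

private theorem orbCount_merge (hinj : Function.Injective c)
    (hso : ∀ u v : α, ∃ m, c^[m] u = v) (hab : a ≠ b) {x y : α}
    (hxa : x ≠ a) (hxb : x ≠ b) (hya : y ≠ a) (hyb : y ≠ b)
    (hex : ∃ k, c^[k] a = b)
    (hx : x ∈ arcSet hex) (hy : y ∉ arcSet hex)
    (f : α → α) (hfa : f a = c b) (hfb : f b = c a) (hfx : f x = c y) (hfy : f y = c x)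
    (hfo : ∀ u, u ≠ a → u ≠ b → u ≠ x → u ≠ y → f u = c u) :
    orbCountOf f = 1 := by
  classical
  have hne : Nonempty α := ⟨a⟩
  set g := twoPt c a b with hg
  have hfg : ∀ u, u ≠ x → u ≠ y → f u = g u := by
    intro u hx' hy'
    by_cases h1 : u = a
    · subst h1; rw [hfa, hg, twoPt_a]
    by_cases h2 : u = b
    · subst h2; rw [hfb, hg, twoPt_b hab]
    · rw [hfo u h1 h2 hx' hy', hg, twoPt_other h1 h2]
  have hgbij : Function.Bijective g := by
    have hgeq : g = c ∘ (Equiv.swap a b) := by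
      funext u
      by_cases h1 : u = a
      · subst h1; simp [hg, twoPt_a]
      by_cases h2 : u = b
      · subst h2; simp [hg, twoPt_b hab]
      · simp [hg, twoPt_other h1 h2, Equiv.swap_apply_of_ne_of_ne h1 h2]
    rw [hgeq]
    exact Finite.injective_iff_bijective.mp (hinj.comp (Equiv.injective _))
  have follow : ∀ (m : ℕ) (u : α), (∀ k < m, g^[k] u ≠ x ∧ g^[k] u ≠ y) →
      f^[m] u = g^[m] u := by
    intro m
    induction m with
    | zero => intro u _; rfl
    | succ m ih =>
      intro u hcond
      rw [Function.iterate_succ_apply', Function.iterate_succ_apply',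
        ih u (fun k hk => hcond k (by omega))]
      exact hfg _ (hcond m (by omega)).1 (hcond m (by omega)).2
  have hinv := arc_invariant hinj hab hex
  have hinv_iter : ∀ (m : ℕ) (u : α), u ∈ arcSet hex ↔ g^[m] u ∈ arcSet hex := by
    intro m
    induction m with
    | zero => intro u; exact Iff.rfl
    | succ m ih =>
      intro u
      rw [Function.iterate_succ_apply']
      exact (ih u).trans (hinv _)
  have reachx : ∀ u ∈ arcSet hex, ∃ m, g^[m] u = x := by
    intro u hu
    obtain ⟨m1, hm1⟩ := reach_b_of_mem hab hex hu
    obtain ⟨m2, hm2⟩ := reach_of_mem_from_b hab hex hx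
    exact ⟨m2 + m1, by rw [Function.iterate_add_apply, hm1, hm2]⟩
  have reachy : ∀ u, u ∉ arcSet hex → ∃ m, g^[m] u = y := by
    intro u hu
    obtain ⟨m1, hm1⟩ := reach_from_a_of_not_mem hinj hab hex hso hu
    obtain ⟨m1', hm1'⟩ := reach_symm hgbij ⟨m1, hm1⟩
    obtain ⟨m2, hm2⟩ := reach_from_a_of_not_mem hinj hab hex hso hy
    exact ⟨m2 + m1', by rw [Function.iterate_add_apply, hm1', hm2]⟩
  have convx : ∀ u ∈ arcSet hex, EqvGen (fun p q : α => q = f p) u x := by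
    intro u hu
    obtain hm := reachx u hu
    set M := Nat.find hm with hMd
    have hMs : g^[M] u = x := Nat.find_spec hm
    have hMmin : ∀ t < M, g^[t] u ≠ x := fun t ht => Nat.find_min hm ht
    have hF : f^[M] u = x := by
      rw [follow M u (fun k hk => ⟨hMmin k hk,
        fun hky => hy (hky ▸ (hinv_iter k u).mp hu)⟩), hMs]
    exact hF ▸ eqvGen_iterate f u M
  have convy : ∀ u, u ∉ arcSet hex → EqvGen (fun p q : α => q = f p) u y := by
    intro u hu
    obtain hm := reachy u hu
    set M := Nat.find hm with hMd
    have hMs : g^[M] u = y := Nat.find_spec hm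
    have hMmin : ∀ t < M, g^[t] u ≠ y := fun t ht => Nat.find_min hm ht
    have hF : f^[M] u = y := by
      rw [follow M u (fun k hk => ⟨
        fun hkx => hu ((hinv_iter k u).mpr (hkx ▸ hx)), hMmin k hk⟩), hMs]
    exact hF ▸ eqvGen_iterate f u M
  have hxy' : EqvGen (fun p q : α => q = f p) x y := by
    have hcy : c y ∉ arcSet hex := by
      intro h
      apply hy
      apply (hinv y).mpr
      rwa [twoPt_other hya hyb]
    exact EqvGen.trans _ _ _ (EqvGen.rel _ _ hfx.symm) (convy (c y) hcy)
  have main : ∀ u, EqvGen (fun p q : α => q = f p) u x := by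
    intro u
    by_cases hu : u ∈ arcSet hex
    · exact convx u hu
    · exact EqvGen.trans _ _ _ (convy u hu) (EqvGen.symm _ _ hxy')
  exact orbCount_eq_one (fun u v =>
    EqvGen.trans _ _ _ (main u) (EqvGen.symm _ _ (main v)))

end ArcLemmas
section CrossSymm

open Function Relation

variable {α : Type*} [Finite α] {c : α → α}

private theorem orbCount_merge_cross (hinj : Function.Injective c)
    (hso : ∀ u v : α, ∃ m, c^[m] u = v) {a b x y : α}
    (hab : a ≠ b) (hxy : x ≠ y) (hxa : x ≠ a) (hxb : x ≠ b) (hya : y ≠ a) (hyb : y ≠ b)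
    (hcr : ChordsCross c a b x y)
    (f : α → α) (hfa : f a = c b) (hfb : f b = c a) (hfx : f x = c y) (hfy : f y = c x)
    (hfo : ∀ u, u ≠ a → u ≠ b → u ≠ x → u ≠ y → f u = c u) :
    orbCountOf f = 1 := by
  have hex : ∃ k, c^[k] a = b := hso a b
  rw [ChordsCross, ← mem_arc_iff_rb hab hex hxa hxb,
    ← mem_arc_iff_rb hab hex hya hyb] at hcr
  by_cases hxI : x ∈ arcSet hex
  · have hyI : y ∉ arcSet hex := fun hyI => hcr (iff_of_true hxI hyI)
    exact orbCount_merge hinj hso hab hxa hxb hya hyb hex hxI hyI _ hfa hfb hfx hfy hfo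
  · have hyI : y ∈ arcSet hex := by
      by_contra hyI
      exact hcr (iff_of_false hxI hyI)
    exact orbCount_merge hinj hso hab hya hyb hxa hxb hex hyI hxI _ hfa hfb hfy hfx
      (fun u h1 h2 h3 h4 => hfo u h1 h2 h4 h3)

private theorem chordsCross_symm (hinj : Function.Injective c)
    (hso : ∀ u v : α, ∃ m, c^[m] u = v) {a b x y : α}
    (hab : a ≠ b) (hxy : x ≠ y) (hxa : x ≠ a) (hxb : x ≠ b) (hya : y ≠ a) (hyb : y ≠ b)
    (h : ChordsCross c a b x y) : ChordsCross c x y a b := by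
  classical
  intro hiff
  -- hiff : ReachesBefore c x a y ↔ ReachesBefore c x b y
  set τ : α → α := fun u =>
    if u = a then b else if u = b then a else if u = x then y else if u = y then x else u
    with hτdef
  have hτa : τ a = b := by simp [hτdef]
  have hτb : τ b = a := by simp [hτdef, Ne.symm hab]
  have hτx : τ x = y := by simp [hτdef, hxa, hxb]
  have hτy : τ y = x := by simp [hτdef, hya, hyb, Ne.symm hxy]
  have hτo : ∀ u, u ≠ a → u ≠ b → u ≠ x → u ≠ y → τ u = u := by
    intro u h1 h2 h3 h4
    simp [hτdef, h1, h2, h3, h4]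
  have hτinv : ∀ u, τ (τ u) = u := by
    intro u
    by_cases h1 : u = a
    · rw [h1, hτa, hτb]
    by_cases h2 : u = b
    · rw [h2, hτb, hτa]
    by_cases h3 : u = x
    · rw [h3, hτx, hτy]
    by_cases h4 : u = y
    · rw [h4, hτy, hτx]
    · rw [hτo u h1 h2 h3 h4, hτo u h1 h2 h3 h4]
  have hfa : (fun u => c (τ u)) a = c b := by simp only [hτa]
  have hfb : (fun u => c (τ u)) b = c a := by simp only [hτb]
  have hfx : (fun u => c (τ u)) x = c y := by simp only [hτx]
  have hfy : (fun u => c (τ u)) y = c x := by simp only [hτy]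
  have hfo : ∀ u, u ≠ a → u ≠ b → u ≠ x → u ≠ y → (fun u => c (τ u)) u = c u := by
    intro u h1 h2 h3 h4
    simp only [hτo u h1 h2 h3 h4]
  have hmerge : orbCountOf (fun u => c (τ u)) = 1 :=
    orbCount_merge_cross hinj hso hab hxy hxa hxb hya hyb h _ hfa hfb hfx hfy hfo
  have hsplit : 1 < orbCountOf (fun u => c (τ u)) := by
    refine orbCount_split hinj hso hxy τ hτx hτinv ?_
    intro u hux huy
    by_cases h1 : u = a
    · rw [h1, hτa]; exact hiff
    by_cases h2 : u = b
    · rw [h2, hτb]; exact hiff.symm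
    · rw [hτo u h1 h2 hux huy]
  rw [hmerge] at hsplit
  exact lt_irrefl 1 hsplit

end CrossSymm
namespace RibbonGraph

variable {n : ℕ} (Γ : RibbonGraph n)

private lemma s1s1 (i : Fin (2 * n)) : Γ.σ1 (Γ.σ1 i) = i := by
  rw [← Equiv.Perm.mul_apply, Γ.invol, Equiv.Perm.one_apply]

private lemma mem_closed_iff {A : Finset (Fin (2 * n))} (hA : Γ.Closed A)
    (i : Fin (2 * n)) : i ∈ A ↔ Γ.σ1 i ∈ A := by
  constructor
  · exact hA i
  · intro h
    have := hA _ h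
    rwa [Γ.s1s1 i] at this

private lemma bdry_inj {A : Finset (Fin (2 * n))} (hA : Γ.Closed A) :
    Function.Injective (Γ.bdryMap A) := by
  intro i j h
  unfold bdryMap at h
  by_cases hi : i ∈ A <;> by_cases hj : j ∈ A <;> simp only [hi, hj, if_pos, if_neg,
    if_true, if_false] at h
  · have := Γ.σ0.injective h
    have := Γ.σ1.injective this
    exact this
  · have := Γ.σ0.injective h
    exact absurd (this ▸ hA i hi) hj
  · have := Γ.σ0.injective h
    exact absurd (this.symm ▸ hA j hj) hi
  · exact Γ.σ0.injective h

private lemma edgeOrd_s1 (i : Fin (2 * n)) : Γ.edgeOrd (Γ.σ1 i) = Γ.edgeOrd i := by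
  unfold edgeOrd
  rw [Γ.s1s1 i, min_comm]

private lemma edgeOrd_eq {i j : Fin (2 * n)} (h : Γ.edgeOrd i = Γ.edgeOrd j) :
    i = j ∨ i = Γ.σ1 j := by
  unfold edgeOrd at h
  rcases min_cases (i : ℕ) ((Γ.σ1 i : Fin (2*n)) : ℕ) with ⟨h1, _⟩ | ⟨h1, _⟩ <;>
    rcases min_cases (j : ℕ) ((Γ.σ1 j : Fin (2*n)) : ℕ) with ⟨h2, _⟩ | ⟨h2, _⟩ <;>
      rw [h1, h2] at h
  · exact Or.inl (Fin.val_injective h)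
  · exact Or.inr (Fin.val_injective h)
  · have h3 : Γ.σ1 i = j := Fin.val_injective h
    exact Or.inr (by rw [← h3, Γ.s1s1])
  · have : Γ.σ1 i = Γ.σ1 j := Fin.val_injective h
    exact Or.inl (Γ.σ1.injective this)

private lemma pair_mem {i j : Fin (2 * n)} : i ∈ Γ.edgePair j ↔ i = j ∨ i = Γ.σ1 j := by
  unfold edgePair
  simp [Finset.mem_insert, Finset.mem_singleton]

private lemma closed_union {A B : Finset (Fin (2 * n))} (hA : Γ.Closed A)
    (hB : Γ.Closed B) : Γ.Closed (A ∪ B) := by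
  intro i hi
  rcases Finset.mem_union.mp hi with h | h
  · exact Finset.mem_union_left _ (hA i h)
  · exact Finset.mem_union_right _ (hB i h)

private lemma closed_toggle {A S : Finset (Fin (2 * n))} (hA : Γ.Closed A)
    (hS : Γ.Closed S) : Γ.Closed ((A \ S) ∪ (S \ A)) := by
  intro i hi
  rcases Finset.mem_union.mp hi with h | h <;> rw [Finset.mem_sdiff] at h
  · exact Finset.mem_union_left _ (Finset.mem_sdiff.mpr
      ⟨hA i h.1, fun hc => h.2 ((Γ.mem_closed_iff hS i).mpr hc)⟩)
  · exact Finset.mem_union_right _ (Finset.mem_sdiff.mpr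
      ⟨hS i h.1, fun hc => h.2 ((Γ.mem_closed_iff hA i).mpr hc)⟩)

private lemma closed_pair (e : Fin (2 * n)) : Γ.Closed (Γ.edgePair e) := by
  intro i hi
  rcases Γ.pair_mem.mp hi with h | h <;> subst h <;> rw [Γ.pair_mem]
  · exact Or.inr rfl
  · exact Or.inl (Γ.s1s1 e)

private lemma toggle_bdry {A S : Finset (Fin (2 * n))} (hA : Γ.Closed A)
    (hS : Γ.Closed S) (i : Fin (2 * n)) :
    Γ.bdryMap ((A \ S) ∪ (S \ A)) i = Γ.bdryMap A (if i ∈ S then Γ.σ1 i else i) := by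
  by_cases hiS : i ∈ S <;> by_cases hiA : i ∈ A <;>
    unfold bdryMap <;> simp only [hiS, hiA, if_true, if_false, Finset.mem_union,
      Finset.mem_sdiff]
  · -- i ∈ S, i ∈ A : LHS σ0 i ; RHS at σ1 i with σ1 i ∈ A
    rw [if_neg (by simp [hiS, hiA]), if_pos ((Γ.mem_closed_iff hA i).mp hiA), Γ.s1s1]
  · -- i ∈ S, i ∉ A
    rw [if_pos (by simp [hiS, hiA]), if_neg (fun hc => hiA ((Γ.mem_closed_iff hA i).mpr hc))]
  · -- i ∉ S, i ∈ A
    rfl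
  · rfl

private lemma ec_restrict {ρ : Fin (2 * n) → Option Bool} (hec : Γ.EdgeConst ρ)
    (e : Fin (2 * n)) : Γ.EdgeConst (Γ.restrictAbove ρ e) := by
  intro i
  unfold restrictAbove
  rw [Γ.edgeOrd_s1, hec i]

private lemma ec_resolve {ρ' : Fin (2 * n) → Option Bool} (hec : Γ.EdgeConst ρ')
    (e : Fin (2 * n)) (b : Bool) : Γ.EdgeConst (Γ.resolveEdge ρ' e b) := by
  intro i
  unfold resolveEdge
  by_cases h : i = e ∨ i = Γ.σ1 e
  · have h' : Γ.σ1 i = e ∨ Γ.σ1 i = Γ.σ1 e := by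
      rcases h with h | h <;> subst h
      · exact Or.inr rfl
      · exact Or.inl (Γ.s1s1 e)
    rw [if_pos h', if_pos h]
  · have h' : ¬(Γ.σ1 i = e ∨ Γ.σ1 i = Γ.σ1 e) := by
      rintro (h' | h')
      · exact h (Or.inr (by rw [← h', Γ.s1s1]))
      · exact h (Or.inl (Γ.σ1.injective h'))
    rw [if_neg h', if_neg h, hec i]

private lemma hset_closed {ρ'' : Fin (2 * n) → Option Bool} (hec : Γ.EdgeConst ρ'') :
    Γ.Closed (Γ.Hset ρ'') := by
  classical
  intro i hi
  rw [Hset, Finset.mem_filter] at hi ⊢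
  exact ⟨Finset.mem_univ _, by rw [hec i]; exact hi.2⟩

private lemma notSplit {ρ'' : Fin (2 * n) → Option Bool} (hec : Γ.EdgeConst ρ'')
    {T : Finset (Fin (2 * n))} (hTcl : Γ.Closed T) (hTf : Γ.faces T = 1)
    (h1 : ∀ i, ρ'' i = some true → i ∈ T) (h2 : ∀ i, ρ'' i = some false → i ∉ T) :
    ¬ Γ.Split ρ'' := by
  classical
  intro hs
  have hU := hs (T.filter (fun i => ρ'' i = none))
    (fun i hi => (Finset.mem_filter.mp hi).2)
    (fun i hi => by
      rw [Finset.mem_filter] at hi ⊢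
      exact ⟨hTcl i hi.1, by rw [hec i]; exact hi.2⟩)
  have heq : Γ.Hset ρ'' ∪ T.filter (fun i => ρ'' i = none) = T := by
    ext i
    rw [Finset.mem_union, Hset, Finset.mem_filter, Finset.mem_filter]
    constructor
    · rintro (⟨_, h⟩ | ⟨h, _⟩)
      · exact h1 i h
      · exact h
    · intro hiT
      rcases hr : ρ'' i with _ | b
      · exact Or.inr ⟨hiT, rfl⟩
      · rcases b with _ | _
        · exact absurd hiT (h2 i hr)
        · exact Or.inl ⟨Finset.mem_univ _, rfl⟩
  rw [heq, hTf] at hU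
  exact lt_irrefl 1 hU

end RibbonGraph
/-- Let `ρ` be a leaf of the binary resolution tree and `A ∈ [ρ]` the
corresponding quasi-tree.  Then an edge is unresolved in `ρ` iff it is live with
respect to `A`. -/
theorem stmt14 {n : ℕ} (Γ : RibbonGraph n) (hΓ : Γ.Connected)
    (ρ : Fin (2 * n) → Option Bool) (hleaf : Γ.IsLeaf ρ)
    (A : Finset (Fin (2 * n))) (hQ : Γ.IsQuasiTree A) (hmem : Γ.MemInterval ρ A) :
    ∀ i, ρ i = none ↔ Γ.Live A i := by
  classical
  obtain ⟨hEC, hNug, hRes⟩ := hleaf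
  obtain ⟨hAcl, _hk1, hf1⟩ := hQ
  have hcinj : Function.Injective (Γ.bdryMap A) := Γ.bdry_inj hAcl
  have hcbij : Function.Bijective (Γ.bdryMap A) := Finite.injective_iff_bijective.mp hcinj
  have hso : ∀ u v, ∃ m, (Γ.bdryMap A)^[m] u = v := reach_of_orbCount_eq_one hcbij hf1
  have hdist : ∀ e u : Fin (2 * n), Γ.edgeOrd u ≠ Γ.edgeOrd e →
      u ≠ e ∧ u ≠ Γ.σ1 e ∧ Γ.σ1 u ≠ e ∧ Γ.σ1 u ≠ Γ.σ1 e := by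
    intro e u hne
    refine ⟨?_, ?_, ?_, ?_⟩
    · rintro rfl; exact hne rfl
    · rintro rfl; exact hne (Γ.edgeOrd_s1 e)
    · intro h; apply hne; rw [← Γ.edgeOrd_s1 u, h]
    · intro h; apply hne; rw [Γ.σ1.injective h]
  -- ### Direction 1 : unresolved ⇒ live
  have dir1 : ∀ e, ρ e = none → Γ.Live A e := by
    intro e hnone
    by_contra hnl
    simp only [RibbonGraph.Live] at hnl
    push_neg at hnl
    obtain ⟨j, hjlt, hcr⟩ := hnl
    have hjne := hdist e j (ne_of_lt hjlt)
    have hee : e ≠ Γ.σ1 e := Ne.symm (Γ.fixfree e)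
    have hjj : j ≠ Γ.σ1 j := Ne.symm (Γ.fixfree j)
    set S : Finset (Fin (2 * n)) := Γ.edgePair e ∪ Γ.edgePair j with hSdef
    have hScl : Γ.Closed S := Γ.closed_union (Γ.closed_pair e) (Γ.closed_pair j)
    set Q1 : Finset (Fin (2 * n)) := (A \ S) ∪ (S \ A) with hQ1def
    have hQ1cl : Γ.Closed Q1 := Γ.closed_toggle hAcl hScl
    have hmemS : ∀ i, i ∈ S ↔ (i = e ∨ i = Γ.σ1 e ∨ i = j ∨ i = Γ.σ1 j) := by
      intro i
      rw [hSdef, Finset.mem_union, Γ.pair_mem, Γ.pair_mem]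
      tauto
    have hQ1mem : ∀ i, i ∈ Q1 ↔ ((i ∈ A ∧ i ∉ S) ∨ (i ∈ S ∧ i ∉ A)) := by
      intro i
      rw [hQ1def, Finset.mem_union, Finset.mem_sdiff, Finset.mem_sdiff]
    have hfQ1 : Γ.faces Q1 = 1 := by
      have htog : Γ.bdryMap Q1 =
          fun u => Γ.bdryMap A (if u ∈ S then Γ.σ1 u else u) := by
        funext u
        rw [hQ1def]
        exact Γ.toggle_bdry hAcl hScl u
      show orbCountOf (Γ.bdryMap Q1) = 1
      rw [htog]
      refine orbCount_merge_cross hcinj hso hee hjj hjne.1 hjne.2.1 hjne.2.2.1 hjne.2.2.2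
        hcr _ ?_ ?_ ?_ ?_ ?_
      · rw [if_pos (by rw [hmemS]; tauto)]
      · rw [if_pos (by rw [hmemS]; tauto), Γ.s1s1]
      · rw [if_pos (by rw [hmemS]; tauto)]
      · rw [if_pos (by rw [hmemS]; tauto), Γ.s1s1]
      · intro u h1 h2 h3 h4
        rw [if_neg (by rw [hmemS]; tauto)]
    have heS : e ∈ S := by rw [hmemS]; tauto
    have heQ1 : e ∈ Q1 ↔ e ∉ A := by
      rw [hQ1mem e]
      tauto
    have hks : ∀ (bv : Bool) (T : Finset (Fin (2 * n))), Γ.Closed T → Γ.faces T = 1 →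
        ((bv = true) ↔ e ∈ T) →
        (∀ i, Γ.edgeOrd e < Γ.edgeOrd i →
          (ρ i = some true → i ∈ T) ∧ (ρ i = some false → i ∉ T)) →
        ¬ Γ.Split (Γ.resolveEdge (Γ.restrictAbove ρ e) e bv) := by
      intro bv T hTcl hTf hbv hcompat
      refine Γ.notSplit (Γ.ec_resolve (Γ.ec_restrict hEC e) e bv) hTcl hTf ?_ ?_
      · intro i hi
        simp only [RibbonGraph.resolveEdge, RibbonGraph.restrictAbove] at hi
        by_cases hp : i = e ∨ i = Γ.σ1 e
        · rw [if_pos hp] at hi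
          have hbT : e ∈ T := hbv.mp (Option.some.inj hi)
          rcases hp with h | h
          · rw [h]; exact hbT
          · rw [h]; exact hTcl e hbT
        · rw [if_neg hp] at hi
          by_cases hlt : Γ.edgeOrd e < Γ.edgeOrd i
          · rw [if_pos hlt] at hi
            exact (hcompat i hlt).1 hi
          · rw [if_neg hlt] at hi
            exact absurd hi (by simp)
      · intro i hi
        simp only [RibbonGraph.resolveEdge, RibbonGraph.restrictAbove] at hi
        by_cases hp : i = e ∨ i = Γ.σ1 e
        · rw [if_pos hp] at hi
          have hbv' : bv = false := Option.some.inj hi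
          have heT : e ∉ T := fun h => by
            have h2 : bv = true := hbv.mpr h
            rw [hbv'] at h2
            exact Bool.false_ne_true h2
          rcases hp with h | h
          · rw [h]; exact heT
          · rw [h]
            intro hc
            exact heT ((Γ.mem_closed_iff hTcl e).mpr hc)
        · rw [if_neg hp] at hi
          by_cases hlt : Γ.edgeOrd e < Γ.edgeOrd i
          · rw [if_pos hlt] at hi
            exact (hcompat i hlt).2 hi
          · rw [if_neg hlt] at hi
            exact absurd hi (by simp)
    have hcompatA : ∀ i, Γ.edgeOrd e < Γ.edgeOrd i →
        (ρ i = some true → i ∈ A) ∧ (ρ i = some false → i ∉ A) := fun i _ => hmem i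
    have hcompatQ1 : ∀ i, Γ.edgeOrd e < Γ.edgeOrd i →
        (ρ i = some true → i ∈ Q1) ∧ (ρ i = some false → i ∉ Q1) := by
      intro i hlt
      have hiS : i ∉ S := by
        rw [hmemS]
        rintro (h | h | h | h) <;> subst h
        · exact lt_irrefl _ hlt
        · rw [Γ.edgeOrd_s1] at hlt; exact lt_irrefl _ hlt
        · exact absurd hlt (lt_asymm hjlt)
        · rw [Γ.edgeOrd_s1] at hlt; exact absurd hlt (lt_asymm hjlt)
      constructor
      · intro h
        rw [hQ1mem]
        exact Or.inl ⟨(hmem i).1 h, hiS⟩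
      · intro h hc
        rw [hQ1mem] at hc
        rcases hc with ⟨hA', _⟩ | ⟨hS', _⟩
        · exact (hmem i).2 h hA'
        · exact hiS hS'
    have hnug := hNug e hnone
    simp only [RibbonGraph.Nugatory] at hnug
    by_cases heA : e ∈ A
    · rcases hnug with h | h
      · exact hks false Q1 hQ1cl hfQ1 (by simp [heQ1, heA]) hcompatQ1 h
      · exact hks true A hAcl hf1 (by simp [heA]) hcompatA h
    · rcases hnug with h | h
      · exact hks false A hAcl hf1 (by simp [heA]) hcompatA h
      · exact hks true Q1 hQ1cl hfQ1 (by simp [heQ1, heA]) hcompatQ1 h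
  -- ### Direction 2 : live ⇒ unresolved
  have dir2 : ∀ e, Γ.Live A e → ρ e = none := by
    intro e hlive
    by_contra hne
    have hnn := hRes e hne
    simp only [RibbonGraph.Nugatory] at hnn
    obtain ⟨hns0, hns1⟩ := not_or.mp hnn
    have hee : e ≠ Γ.σ1 e := Ne.symm (Γ.fixfree e)
    set bv : Bool := if e ∈ A then false else true with hbvdef
    have hnsp : ¬ Γ.Split (Γ.resolveEdge (Γ.restrictAbove ρ e) e bv) := by
      by_cases heA : e ∈ A
      · rw [hbvdef, if_pos heA]; exact hns0
      · rw [hbvdef, if_neg heA]; exact hns1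
    set ρ'' := Γ.resolveEdge (Γ.restrictAbove ρ e) e bv with hrdef
    have hec'' : Γ.EdgeConst ρ'' := Γ.ec_resolve (Γ.ec_restrict hEC e) e bv
    simp only [RibbonGraph.Split] at hnsp
    push_neg at hnsp
    obtain ⟨U, hU1, hU2, hUf⟩ := hnsp
    set Q' := Γ.Hset ρ'' ∪ U with hQ'def
    have hQ'cl : Γ.Closed Q' := Γ.closed_union (Γ.hset_closed hec'') hU2
    set S := (A \ Q') ∪ (Q' \ A) with hSdef
    have hScl : Γ.Closed S := Γ.closed_toggle hAcl hQ'cl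
    have hSmem : ∀ i, i ∈ S ↔ ((i ∈ A ∧ i ∉ Q') ∨ (i ∈ Q' ∧ i ∉ A)) := by
      intro i
      rw [hSdef, Finset.mem_union, Finset.mem_sdiff, Finset.mem_sdiff]
    have hres_e : ρ'' e = some bv := by
      rw [hrdef]
      simp [RibbonGraph.resolveEdge]
    have heQ' : e ∉ A ↔ e ∈ Q' := by
      by_cases heA : e ∈ A
      · have hbv : bv = false := by rw [hbvdef, if_pos heA]
        refine iff_of_false (not_not_intro heA) ?_
        rw [hQ'def, Finset.mem_union]
        rintro (h | h)
        · rw [RibbonGraph.Hset, Finset.mem_filter] at h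
          rw [hres_e, hbv] at h
          simp at h
        · have h2 := hU1 e h
          rw [hres_e] at h2
          simp at h2
      · have hbv : bv = true := by rw [hbvdef, if_neg heA]
        refine iff_of_true heA ?_
        rw [hQ'def, Finset.mem_union]
        left
        rw [RibbonGraph.Hset, Finset.mem_filter]
        exact ⟨Finset.mem_univ _, by rw [hres_e, hbv]⟩
    have heS : e ∈ S := by
      rw [hSmem]
      by_cases heA : e ∈ A
      · exact Or.inl ⟨heA, fun hc => (heQ'.mpr hc) heA⟩
      · exact Or.inr ⟨heQ'.mp heA, heA⟩
    have hval : ∀ u, u ≠ e → u ≠ Γ.σ1 e → Γ.edgeOrd e < Γ.edgeOrd u → ρ'' u = ρ u := by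
      intro u h1 h2 hlt
      rw [hrdef]
      simp only [RibbonGraph.resolveEdge, RibbonGraph.restrictAbove]
      rw [if_neg (by tauto), if_pos hlt]
    have hchordS : ∀ u, u ∈ S → u ≠ e → u ≠ Γ.σ1 e →
        (ReachesBefore (Γ.bdryMap A) e u (Γ.σ1 e) ↔
         ReachesBefore (Γ.bdryMap A) e (Γ.σ1 u) (Γ.σ1 e)) := by
      intro u huS hue hue'
      have hnc : ¬ Γ.Crosses A e u := by
        rcases lt_trichotomy (Γ.edgeOrd u) (Γ.edgeOrd e) with hlt | heq | hgt
        · exact hlive u hlt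
        · rcases Γ.edgeOrd_eq heq with h | h
          · exact absurd h hue
          · exact absurd h hue'
        · have hρu : ρ u = none := by
            rcases hr : ρ u with _ | b
            · rfl
            · exfalso
              have hvu : ρ'' u = some b := by rw [hval u hue hue' hgt]; exact hr
              rcases b with _ | _
              · have huA : u ∉ A := (hmem u).2 hr
                have huQ : u ∉ Q' := by
                  rw [hQ'def, Finset.mem_union]
                  rintro (h | h)
                  · rw [RibbonGraph.Hset, Finset.mem_filter] at h
                    rw [hvu] at h
                    simp at h
                  · have h2 := hU1 u h
                    rw [hvu] at h2
                    simp at h2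
                rw [hSmem] at huS
                tauto
              · have huA : u ∈ A := (hmem u).1 hr
                have huQ : u ∈ Q' := by
                  rw [hQ'def, Finset.mem_union]
                  left
                  rw [RibbonGraph.Hset, Finset.mem_filter]
                  exact ⟨Finset.mem_univ _, hvu⟩
                rw [hSmem] at huS
                tauto
          have hnc' : ¬ Γ.Crosses A u e := dir1 u hρu e hgt
          intro hcru
          apply hnc'
          have hd := hdist e u (ne_of_gt hgt)
          exact chordsCross_symm hcinj hso hee (Ne.symm (Γ.fixfree u)) hd.1 hd.2.1
            hd.2.2.1 hd.2.2.2 hcru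
      simp only [RibbonGraph.Crosses, ChordsCross] at hnc
      exact not_not.mp hnc
    set τ : Fin (2 * n) → Fin (2 * n) := fun u => if u ∈ S then Γ.σ1 u else u with hτdef
    have hτa : τ e = Γ.σ1 e := by simp only [hτdef]; rw [if_pos heS]
    have hτinv : ∀ u, τ (τ u) = u := by
      intro u
      simp only [hτdef]
      by_cases h : u ∈ S
      · rw [if_pos h, if_pos (hScl u h), Γ.s1s1]
      · rw [if_neg h, if_neg h]
    have hchord : ∀ u, u ≠ e → u ≠ Γ.σ1 e →
        (ReachesBefore (Γ.bdryMap A) e u (Γ.σ1 e) ↔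
         ReachesBefore (Γ.bdryMap A) e (τ u) (Γ.σ1 e)) := by
      intro u h1 h2
      by_cases h : u ∈ S
      · simp only [hτdef]
        rw [if_pos h]
        exact hchordS u h h1 h2
      · simp only [hτdef]
        rw [if_neg h]
    have hsp := orbCount_split hcinj hso hee τ hτa hτinv hchord
    have hface : Γ.faces Q' = orbCountOf (fun u => Γ.bdryMap A (τ u)) := by
      have hQeq : (A \ S) ∪ (S \ A) = Q' := by
        ext i
        rw [Finset.mem_union, Finset.mem_sdiff, Finset.mem_sdiff, hSmem i]
        tauto
      show orbCountOf (Γ.bdryMap Q') = _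
      rw [← hQeq]
      exact congrArg orbCountOf (funext (fun u => by
        simp only [hτdef]
        exact Γ.toggle_bdry hAcl hScl u))
    rw [← hface] at hsp
    omega
  intro i
  exact ⟨dir1 i, dir2 i⟩
end

section
/- Let Q be a quasi-tree of a connected ribbon graph Γ, parametrized by the chord diagram C_Q, and let e be an edge of Γ − Q whose chord in C_Q crosses no other chord. Then adding e to any spanning subgraph H with Q-dead edge set containing the component structure of D(Q) does not change the number of components: k(D(Q) ∪ {e}) = k(D(Q)), and f(D(Q) ∪ {e}) = f(D(Q)) + 1. -/
open Equiv

/-! Since `A` has a single face, `γ_A` is one cycle and the chord of `e` cuts it into two arcs.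
Each boundary step of a spanning subgraph `B ∌ e` is a step of `γ_A` taken from `x` or from its
partner `σ1 x`; as no chord crosses that of `e`, these two points lie on the same arc. Hence the
boundary component of `B` through `e` runs along the arc from `e` and can only close up through
`σ1 e`: both ends of `e` lie on one boundary component of `B`, so in one component of `B`. Adding
`e` composes the boundary permutation with the transposition of its two ends, and a transposition
of two points of the same cycle splits that cycle in two. -/

open Equiv.Perm Function

theorem card_quot_eq_of_eqvGen {α : Type*} {r r' : α → α → Prop}
    (h : ∀ x y, r x y → Relation.EqvGen r' x y) (h' : ∀ x y, r' x y → Relation.EqvGen r x y) :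
    Nat.card (Quot r) = Nat.card (Quot r') :=
  Nat.card_congr
    { toFun := Quot.lift (Quot.mk r') fun x y hxy => Quot.eqvGen_sound (h x y hxy)
      invFun := Quot.lift (Quot.mk r) fun x y hxy => Quot.eqvGen_sound (h' x y hxy)
      left_inv := fun q => by induction q using Quot.ind; rfl
      right_inv := fun q => by induction q using Quot.ind; rfl }

section ReachesBefore

variable {α : Type*} {f : α → α} {a b x y : α}

theorem reachesBefore_self (hab : a ≠ b) : ReachesBefore f a a b :=
  ⟨0, rfl, fun k hk => by rwa [Nat.le_zero.mp hk]⟩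

theorem ReachesBefore.ne (h : ReachesBefore f a x b) : x ≠ b := by
  obtain ⟨m, rfl, hm⟩ := h
  exact hm m le_rfl

theorem ReachesBefore.apply (h : ReachesBefore f a x b) (hx : f x ≠ b) :
    ReachesBefore f a (f x) b := by
  obtain ⟨m, rfl, hm⟩ := h
  refine ⟨m + 1, iterate_succ_apply' f m a, fun k hk => ?_⟩
  rcases hk.lt_or_eq with hk | rfl
  · exact hm k (Nat.lt_succ_iff.mp hk)
  · rwa [iterate_succ_apply']

/-- An arc from `a` that closes up at `a` before meeting `b` is a whole periodic orbit
avoiding `b`. -/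
theorem ReachesBefore.iterate_ne (h : ReachesBefore f a y b) (hy : f y = a) (j : ℕ) :
    f^[j] a ≠ b := by
  obtain ⟨m, rfl, hm⟩ := h
  have hper : IsPeriodicPt f (m + 1) a := by
    rw [IsPeriodicPt, IsFixedPt, iterate_succ_apply', hy]
  rw [← hper.iterate_mod_apply]
  exact hm _ (Nat.lt_succ_iff.mp (Nat.mod_lt _ m.succ_pos))

theorem reachesBefore_or_reachesBefore (hab : a ≠ b) (hx : ∃ j, f^[j] b = x) :
    ReachesBefore f b x a ∨ ReachesBefore f a x b := by
  classical
  set N := Nat.find hx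
  by_cases h : ∀ k ≤ N, f^[k] b ≠ a
  · exact Or.inl ⟨N, Nat.find_spec hx, h⟩
  push Not at h
  obtain ⟨k, hk, hka⟩ := h
  refine Or.inr ⟨N - k, ?_, fun l hl hlb => ?_⟩
  · rw [← hka, ← iterate_add_apply, Nat.sub_add_cancel hk, Nat.find_spec hx]
  · have hret : f^[N - k - l] b = x := by
      conv_lhs => rw [← hlb, ← hka, ← iterate_add_apply, ← iterate_add_apply]
      rw [show N - k - l + l + k = N by omega, Nat.find_spec hx]
    have := Nat.find_min' hx hret
    obtain rfl : k = 0 := by omega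
    exact hab hka.symm

theorem not_reachesBefore_and_reachesBefore (hf : Injective f) :
    ¬ (ReachesBefore f b x a ∧ ReachesBefore f a x b) := by
  rintro ⟨⟨m, hm, hma⟩, ⟨m', hm', hmb⟩⟩
  rcases le_total m m' with h | h
  · refine hmb (m' - m) (Nat.sub_le _ _) (hf.iterate m ?_)
    rw [← iterate_add_apply, Nat.add_sub_cancel' h, hm', hm]
  · refine hma (m - m') (Nat.sub_le _ _) (hf.iterate m' ?_)
    rw [← iterate_add_apply, Nat.add_sub_cancel' h, hm', hm]

end ReachesBefore

namespace Equiv.Perm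

variable {α : Type*} [Finite α] {σ : Perm α} {a b x y : α}

theorem SameCycle.exists_iterate_eq (h : SameCycle σ x y) : ∃ j, σ^[j] x = y :=
  h.exists_nat_pow_eq

theorem SameCycle.induction_apply {P : α → Prop} (h : SameCycle σ x y) (hx : P x)
    (hstep : ∀ z, SameCycle σ x z → P z → P (σ z)) : P y := by
  obtain ⟨n, rfl⟩ := h.exists_iterate_eq
  clear h
  induction n with
  | zero => exact hx
  | succ n ih =>
    rw [iterate_succ_apply']
    exact hstep _ ⟨n, by rw [zpow_natCast, coe_pow]⟩ ih

theorem orbCountOf_eq_card_quotient (σ : Perm α) :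
    orbCountOf σ = Nat.card (Quotient (SameCycle.setoid σ)) :=
  card_quot_eq_of_eqvGen
    (fun _ _ hxy => .rel _ _ (hxy ▸ sameCycle_apply_right.mpr .rfl))
    fun x _ hxy => hxy.induction_apply (.refl x) fun _ _ hz => hz.trans _ _ _ (.rel _ _ rfl)

theorem sameCycle_of_orbCountOf_eq_one (h : orbCountOf σ = 1) (x y : α) : SameCycle σ x y := by
  rw [orbCountOf_eq_card_quotient] at h
  have := (Nat.card_eq_one_iff_unique.mp h).1
  exact Quotient.exact (Subsingleton.elim (⟦x⟧ : Quotient (SameCycle.setoid σ)) ⟦y⟧)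

theorem reachesBefore_iff_not_reachesBefore (hσ : ∀ x y, SameCycle σ x y) (hab : a ≠ b)
    (x : α) : ReachesBefore σ b x a ↔ ¬ ReachesBefore σ a x b :=
  ⟨fun hb ha => not_reachesBefore_and_reachesBefore σ.injective ⟨hb, ha⟩,
    (reachesBefore_or_reachesBefore hab (hσ b x).exists_iterate_eq).resolve_right⟩

theorem chordsCross_comm_left (hσ : ∀ x y, SameCycle σ x y) (hab : a ≠ b) (c d : α) :
    ChordsCross σ b a c d ↔ ChordsCross σ a b c d := by
  simp only [ChordsCross, reachesBefore_iff_not_reachesBefore hσ hab, not_iff_not]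

/-- The `σ`-orbit of `a` stays on the arc until it meets `b`; it cannot close up at `a` before,
by `ReachesBefore.iterate_ne`, since `b` is reached from `a`. -/
theorem sameCycle_of_forall_reachesBefore {f : α → α} (hab : a ≠ b) (hreach : ∃ j, f^[j] a = b)
    (harc : ∀ x, ReachesBefore f a x b → ∃ y, σ x = f y ∧ ReachesBefore f a y b) :
    SameCycle σ a b := by
  by_contra hne
  have hrb (z : α) (hz : SameCycle σ a z) : ReachesBefore f a z b :=
    hz.induction_apply (P := (ReachesBefore f a · b)) (reachesBefore_self hab) fun z hz hrb => by
      obtain ⟨y, hzy, hy⟩ := harc z hrb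
      exact hzy ▸ hy.apply fun hb =>
        hne (hz.trans (sameCycle_apply_right.mpr .rfl) |>.trans (hzy ▸ hb ▸ .rfl))
  obtain ⟨y, hy, hya⟩ := harc _ (hrb (σ.symm a) (sameCycle_symm_apply_right.mpr .rfl))
  obtain ⟨j, hj⟩ := hreach
  exact hya.iterate_ne (by rw [← hy, apply_symm_apply]) j hj

section swap

variable [DecidableEq α]

theorem SameCycle.of_mul_swap (h : SameCycle σ a b) (hxy : SameCycle (σ * swap a b) x y) :
    SameCycle σ x y :=
  hxy.induction_apply .rfl fun z _ hz => hz.trans <| by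
    rw [mul_apply, sameCycle_apply_right]
    rcases eq_or_ne z a with rfl | hza
    · rw [swap_apply_left]; exact h
    rcases eq_or_ne z b with rfl | hzb
    · rw [swap_apply_right]; exact h.symm
    · rw [swap_apply_of_ne_of_ne hza hzb]

theorem SameCycle.mul_swap_of_not_sameCycle (h : SameCycle σ a b) (hax : ¬ SameCycle σ a x)
    (hxy : SameCycle σ x y) : SameCycle (σ * swap a b) x y := by
  refine (hxy.induction_apply (P := fun z => SameCycle σ x z ∧ SameCycle (σ * swap a b) x z)
    ⟨.rfl, .rfl⟩ fun z _ ⟨hσz, hτz⟩ => ⟨hσz.trans (sameCycle_apply_right.mpr .rfl), ?_⟩).2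
  have hza : z ≠ a := by rintro rfl; exact hax hσz.symm
  have hzb : z ≠ b := by rintro rfl; exact hax (h.trans hσz.symm)
  have : σ z = (σ * swap a b) z := by rw [mul_apply, swap_apply_of_ne_of_ne hza hzb]
  exact this ▸ hτz.trans (sameCycle_apply_right.mpr .rfl)

theorem SameCycle.mul_swap_or (hx : SameCycle σ a x) :
    SameCycle (σ * swap a b) a x ∨ SameCycle (σ * swap a b) b x := by
  refine hx.induction_apply
    (P := fun z => SameCycle (σ * swap a b) a z ∨ SameCycle (σ * swap a b) b z) (Or.inl .rfl) fun z _ hz => ?_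
  rcases eq_or_ne z a with rfl | hza
  · right
    rw [show σ z = (σ * swap z b) b by rw [mul_apply, swap_apply_right]]
    exact sameCycle_apply_right.mpr .rfl
  rcases eq_or_ne z b with rfl | hzb
  · left
    rw [show σ z = (σ * swap a z) a by rw [mul_apply, swap_apply_left]]
    exact sameCycle_apply_right.mpr .rfl
  rw [← swap_apply_of_ne_of_ne hza hzb, ← mul_apply]
  exact hz.imp (·.trans (sameCycle_apply_right.mpr .rfl)) (·.trans (sameCycle_apply_right.mpr .rfl))

theorem SameCycle.not_sameCycle_mul_swap (h : SameCycle σ a b) (hab : a ≠ b) :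
    ¬ SameCycle (σ * swap a b) a b := by
  -- the `σ * swap a b`-orbit of `a` is `a, σ b, σ (σ b), …` up to `a`, which never meets `b`
  have hkey : ¬ ReachesBefore σ (σ b) b a := fun hb => by
    obtain ⟨j, hj⟩ := h.symm.exists_iterate_eq
    cases j with
    | zero => exact hab hj.symm
    | succ j => exact hb.iterate_ne (Eq.refl _) j (by rwa [iterate_succ_apply] at hj)
  intro hτ
  have : b = a ∨ ReachesBefore σ (σ b) b a := hτ.induction_apply
      (P := fun z => z = a ∨ ReachesBefore σ (σ b) z a) (Or.inl (Eq.refl a)) fun z _ hz => by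
    rw [mul_apply]
    rcases hz with hza | hz
    · rw [hza, swap_apply_left]
      exact (em (σ b = a)).imp_right reachesBefore_self
    · have hzb : z ≠ b := by rintro rfl; exact hkey hz
      rw [swap_apply_of_ne_of_ne hz.ne hzb]
      exact (em (σ z = a)).imp_right hz.apply
  exact this.elim hab.symm hkey

theorem orbCountOf_mul_swap (h : SameCycle σ a b) (hab : a ≠ b) :
    orbCountOf ⇑(σ * swap a b) = orbCountOf σ + 1 := by
  classical
  set τ := σ * swap a b
  let φ (q : {q : Quotient (SameCycle.setoid τ) // q ≠ ⟦b⟧}) : Quotient (SameCycle.setoid σ) :=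
    Quotient.map id (fun _ _ => h.of_mul_swap) q.1
  have hφ : Bijective φ := by
    constructor
    · rintro ⟨q, hq⟩ ⟨q', hq'⟩ hqq'
      induction q using Quotient.inductionOn
      induction q' using Quotient.inductionOn
      rename_i x y
      have hxy : SameCycle σ x y := Quotient.exact hqq'
      have hb (z) (hz : (⟦z⟧ : Quotient (SameCycle.setoid τ)) ≠ ⟦b⟧) (haz : SameCycle σ a z) :
          SameCycle τ a z :=
        haz.mul_swap_or.resolve_right fun hbz => hz (Quotient.sound hbz.symm)
      refine Subtype.ext (Quotient.sound ?_)
      by_cases hax : SameCycle σ a x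
      · exact (hb x hq hax).symm.trans (hb y hq' (hax.trans hxy))
      · exact h.mul_swap_of_not_sameCycle hax hxy
    · rintro ⟨x⟩
      by_cases hbx : SameCycle τ b x
      · refine ⟨⟨⟦a⟧, fun hab' => h.not_sameCycle_mul_swap hab (Quotient.exact hab')⟩, ?_⟩
        exact Quotient.sound (h.trans (h.of_mul_swap hbx))
      · exact ⟨⟨⟦x⟧, fun hxb => hbx (Quotient.exact hxb).symm⟩, rfl⟩
  rw [orbCountOf_eq_card_quotient, orbCountOf_eq_card_quotient,
    ← Nat.card_congr (optionSubtypeNe (⟦b⟧ : Quotient (SameCycle.setoid τ))), Finite.card_option,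
    Nat.card_congr (Equiv.ofBijective φ hφ)]

end swap

end Equiv.Perm

namespace RibbonGraph

variable {n : ℕ} {Γ : RibbonGraph n} {A B : Finset (Fin (2 * n))} {e i j x y : Fin (2 * n)}

@[simp]
theorem σ1_σ1 (Γ : RibbonGraph n) (i : Fin (2 * n)) : Γ.σ1 (Γ.σ1 i) = i :=
  Perm.ext_iff.mp Γ.invol i

theorem edgeOrd_σ1 (Γ : RibbonGraph n) (i : Fin (2 * n)) : Γ.edgeOrd (Γ.σ1 i) = Γ.edgeOrd i := by
  rw [edgeOrd, edgeOrd, σ1_σ1, min_comm]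

theorem eq_or_eq_σ1_of_edgeOrd_eq (h : Γ.edgeOrd j = Γ.edgeOrd i) : j = i ∨ j = Γ.σ1 i := by
  rcases min_choice (j : ℕ) (Γ.σ1 j) with hj | hj <;>
    rcases min_choice (i : ℕ) (Γ.σ1 i) with hi | hi <;>
    rw [edgeOrd, edgeOrd, hj, hi] at h <;> have h := Fin.ext h
  · exact .inl h
  · exact .inr h
  · exact .inr (by rw [← h, σ1_σ1])
  · exact .inl (Γ.σ1.injective h)

theorem Closed.σ1_mem_iff (hB : Γ.Closed B) : Γ.σ1 i ∈ B ↔ i ∈ B :=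
  ⟨fun h => by simpa using hB _ h, hB i⟩

theorem Closed.union_edgePair (hB : Γ.Closed B) (e : Fin (2 * n)) :
    Γ.Closed (B ∪ Γ.edgePair e) := by
  intro i hi
  simp only [edgePair, Finset.mem_union, Finset.mem_insert, Finset.mem_singleton] at hi ⊢
  rcases hi with hi | rfl | rfl
  · exact .inl (hB i hi)
  · exact .inr (.inr rfl)
  · exact .inr (.inl (σ1_σ1 _ _))

theorem bdryMap_bijective (hB : Γ.Closed B) : Bijective (Γ.bdryMap B) := by
  have hinv : Involutive fun i => if i ∈ B then Γ.σ1 i else i := fun i => by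
    by_cases hi : i ∈ B <;> simp [hi, hB i]
  have : Γ.bdryMap B = Γ.σ0 ∘ fun i => if i ∈ B then Γ.σ1 i else i := by
    funext i
    simp only [bdryMap, comp_apply]
    split_ifs <;> rfl
  exact this ▸ Γ.σ0.bijective.comp hinv.bijective

noncomputable def bdryPerm (hB : Γ.Closed B) : Perm (Fin (2 * n)) :=
  Equiv.ofBijective _ (bdryMap_bijective hB)

@[simp]
theorem coe_bdryPerm (hB : Γ.Closed B) : ⇑(bdryPerm hB) = Γ.bdryMap B := rfl

theorem IsQuasiTree.sameCycle (hA : Γ.IsQuasiTree A) (x y : Fin (2 * n)) :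
    SameCycle (bdryPerm hA.1) x y :=
  sameCycle_of_orbCountOf_eq_one (σ := bdryPerm hA.1) hA.2.2 x y

theorem IsQuasiTree.crosses_σ1_left (hA : Γ.IsQuasiTree A) :
    Γ.Crosses A (Γ.σ1 i) j ↔ Γ.Crosses A i j := by
  rw [Crosses, Crosses, σ1_σ1]
  exact chordsCross_comm_left hA.sameCycle (Γ.fixfree i).symm _ _

theorem IsQuasiTree.live_σ1_iff (hA : Γ.IsQuasiTree A) : Γ.Live A (Γ.σ1 i) ↔ Γ.Live A i := by
  simp only [Live, edgeOrd_σ1, hA.crosses_σ1_left]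

theorem deadIn_subset (Γ : RibbonGraph n) (A : Finset (Fin (2 * n))) : Γ.deadIn A ⊆ A := by
  classical
  exact Finset.filter_subset _ _

theorem IsQuasiTree.closed_deadIn (hA : Γ.IsQuasiTree A) : Γ.Closed (Γ.deadIn A) := by
  classical
  intro i hi
  simp only [deadIn, Finset.mem_filter] at hi ⊢
  exact ⟨hA.1 i hi.1, hA.live_σ1_iff.not.mpr hi.2⟩

theorem bdryMap_eq_or (hA : Γ.Closed A) (B : Finset (Fin (2 * n))) (x : Fin (2 * n)) :
    Γ.bdryMap B x = Γ.bdryMap A x ∨ Γ.bdryMap B x = Γ.bdryMap A (Γ.σ1 x) := by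
  simp only [bdryMap, hA.σ1_mem_iff, σ1_σ1]
  split_ifs <;> simp

theorem bdryPerm_union_edgePair (hB : Γ.Closed B) (he : e ∉ B) (he' : Γ.σ1 e ∉ B) :
    bdryPerm (hB.union_edgePair e) = bdryPerm hB * swap e (Γ.σ1 e) := by
  ext i
  simp only [coe_bdryPerm, Perm.mul_apply, bdryMap, edgePair, Finset.mem_union,
    Finset.mem_insert, Finset.mem_singleton]
  rcases eq_or_ne i e with rfl | hie
  · simp [he']
  rcases eq_or_ne i (Γ.σ1 e) with rfl | hie'
  · simp [he]
  · simp [hie, hie', swap_apply_of_ne_of_ne hie hie']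

theorem faces_union_edgePair (hB : Γ.Closed B) (he : e ∉ B) (he' : Γ.σ1 e ∉ B)
    (h : SameCycle (bdryPerm hB) e (Γ.σ1 e)) :
    Γ.faces (B ∪ Γ.edgePair e) = Γ.faces B + 1 := by
  rw [faces, faces, ← coe_bdryPerm (hB.union_edgePair e), ← coe_bdryPerm hB,
    bdryPerm_union_edgePair hB he he', orbCountOf_mul_swap h (Γ.fixfree e).symm]

theorem eqvGen_compRel_of_sameCycle (hB : Γ.Closed B) (h : SameCycle (bdryPerm hB) x y) :
    Relation.EqvGen (Γ.compRel B) x y := by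
  refine h.induction_apply (.refl x) fun z _ hz => hz.trans _ _ _ ?_
  rw [coe_bdryPerm, bdryMap]
  split_ifs with hzB
  · exact .trans _ _ _ (.rel _ _ (.inr ⟨hzB, rfl⟩)) (.rel _ _ (.inl rfl))
  · exact .rel _ _ (.inl rfl)

theorem kComp_union_edgePair (h : Relation.EqvGen (Γ.compRel B) e (Γ.σ1 e)) :
    Γ.kComp (B ∪ Γ.edgePair e) = Γ.kComp B := by
  refine card_quot_eq_of_eqvGen (fun x y hxy => ?_) fun x y hxy => ?_
  · rcases hxy with hxy | ⟨hx, rfl⟩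
    · exact .rel _ _ (.inl hxy)
    simp only [edgePair, Finset.mem_union, Finset.mem_insert, Finset.mem_singleton] at hx
    rcases hx with hx | rfl | rfl
    · exact .rel _ _ (.inr ⟨hx, rfl⟩)
    · exact h
    · simpa using h.symm
  · rcases hxy with hxy | ⟨hx, rfl⟩
    · exact .rel _ _ (.inl hxy)
    · exact .rel _ _ (.inr ⟨Finset.mem_union_left _ hx, rfl⟩)

theorem IsQuasiTree.sameCycle_of_forall_not_crosses (hA : Γ.IsQuasiTree A) (hB : Γ.Closed B)
    (heA : e ∉ A) (heB : e ∉ B) (hcross : ∀ j, Γ.edgeOrd j ≠ Γ.edgeOrd e → ¬ Γ.Crosses A e j) :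
    SameCycle (bdryPerm hB) e (Γ.σ1 e) := by
  refine sameCycle_of_forall_reachesBefore (f := Γ.bdryMap A) (Γ.fixfree e).symm
    (hA.sameCycle e (Γ.σ1 e)).exists_iterate_eq fun x hx => ?_
  by_cases hxe : x = e
  · subst hxe
    exact ⟨x, by simp [bdryMap, heA, heB], hx⟩
  have hside : ReachesBefore (Γ.bdryMap A) e x (Γ.σ1 e) ↔
      ReachesBefore (Γ.bdryMap A) e (Γ.σ1 x) (Γ.σ1 e) :=
    not_not.mp <| hcross x fun h => (eq_or_eq_σ1_of_edgeOrd_eq h).elim hxe hx.ne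
  rcases bdryMap_eq_or hA.1 B x with h | h
  · exact ⟨x, h, hx⟩
  · exact ⟨Γ.σ1 x, h, hside.mp hx⟩

end RibbonGraph

theorem stmt17_general {n : ℕ} (Γ : RibbonGraph n)
    (A : Finset (Fin (2 * n))) (hA : Γ.IsQuasiTree A)
    (e : Fin (2 * n)) (he : e ∉ A)
    (hcross : ∀ j, Γ.edgeOrd j ≠ Γ.edgeOrd e → ¬ Γ.Crosses A e j) :
    Γ.kComp (Γ.deadIn A ∪ {e, Γ.σ1 e}) = Γ.kComp (Γ.deadIn A) ∧
    Γ.faces (Γ.deadIn A ∪ {e, Γ.σ1 e}) = Γ.faces (Γ.deadIn A) + 1 := by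
  have hD := hA.closed_deadIn
  have heD : e ∉ Γ.deadIn A := fun h => he (Γ.deadIn_subset A h)
  have he'D : Γ.σ1 e ∉ Γ.deadIn A := fun h => he (hA.1.σ1_mem_iff.mp (Γ.deadIn_subset A h))
  have hcyc := hA.sameCycle_of_forall_not_crosses hD he heD hcross
  exact ⟨RibbonGraph.kComp_union_edgePair (RibbonGraph.eqvGen_compRel_of_sameCycle hD hcyc),
    RibbonGraph.faces_union_edgePair hD heD he'D hcyc⟩

/-- If `e` is an edge of `Γ - A` whose chord in `C_A` crosses no other
chord, then adding `e` to the internally dead subgraph `D(A)` preserves the number of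
components and increases the number of faces by one. -/
theorem stmt17 {n : ℕ} (Γ : RibbonGraph n) (hΓ : Γ.Connected)
    (A : Finset (Fin (2 * n))) (hA : Γ.IsQuasiTree A)
    (e : Fin (2 * n)) (he : e ∉ A)
    (hcross : ∀ j, Γ.edgeOrd j ≠ Γ.edgeOrd e → ¬ Γ.Crosses A e j) :
    Γ.kComp (Γ.deadIn A ∪ {e, Γ.σ1 e}) = Γ.kComp (Γ.deadIn A) ∧
    Γ.faces (Γ.deadIn A ∪ {e, Γ.σ1 e}) = Γ.faces (Γ.deadIn A) + 1 :=
  stmt17_general Γ A hA e he hcross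
end
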